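/- Let A = A₁ × A₂ for finite nonempty action sets A₁, A₂, let π be a pure strategy profile, and let ι > 0. If a reward function R : A → ℝ satisfies R((π₁, a₂)) + ι ≤ R(π) ≤ R((a₁, π₂)) − ι for all a₁ ≠ π₁ and a₂ ≠ π₂, then π is the unique Nash equilibrium of (A, R) among all mixed strategy profiles; that is, the ι-strict unique Nash set U̲(π; ι) is contained in the unique Nash set U(π). -/

import Mathlib

open Finset

/-- A mixed strategy: nonnegative weights summing to one. -/
def IsMixed {α : Type*} [Fintype α] (p : α → ℝ) : Prop :=
  (∀ a, 0 ≤ p a) ∧ ∑ a, p a = 1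

/-- The point-mass distribution at `a`. -/
def pmass {α : Type*} [DecidableEq α] (a : α) : α → ℝ :=
  fun x => if x = a then 1 else 0

/-- Expected reward of a mixed strategy profile `(p, q)` in the game with reward `R`. -/
def expR {A₁ A₂ : Type*} [Fintype A₁] [Fintype A₂]
    (R : A₁ × A₂ → ℝ) (p : A₁ → ℝ) (q : A₂ → ℝ) : ℝ :=
  ∑ a₁, ∑ a₂, p a₁ * q a₂ * R (a₁, a₂)

/-- `(p, q)` is a (mixed) Nash equilibrium of the zero-sum game with reward `R`
(player 1 minimizes `R`, player 2 maximizes `R`). -/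
def IsNE {A₁ A₂ : Type*} [Fintype A₁] [Fintype A₂] [DecidableEq A₁] [DecidableEq A₂]
    (R : A₁ × A₂ → ℝ) (p : A₁ → ℝ) (q : A₂ → ℝ) : Prop :=
  IsMixed p ∧ IsMixed q ∧
  (∀ a₂, expR R p (pmass a₂) ≤ expR R p q) ∧
  (∀ a₁, expR R p q ≤ expR R (pmass a₁) q)

/-- The set of all mixed Nash equilibria of the game with reward `R`. -/
def NESet {A₁ A₂ : Type*} [Fintype A₁] [Fintype A₂] [DecidableEq A₁] [DecidableEq A₂]
    (R : A₁ × A₂ → ℝ) : Set ((A₁ → ℝ) × (A₂ → ℝ)) :=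
  {pq | IsNE R pq.1 pq.2}

/-- The pure strategy profile `π` is a strict Nash equilibrium of the game with reward `R`. -/
def IsStrictNE {A₁ A₂ : Type*} (R : A₁ × A₂ → ℝ) (π : A₁ × A₂) : Prop :=
  (∀ a₂, a₂ ≠ π.2 → R (π.1, a₂) < R π) ∧
  (∀ a₁, a₁ ≠ π.1 → R π < R (a₁, π.2))


lemma expR_pm_right {A₁ A₂ : Type*} [Fintype A₁] [Fintype A₂] [DecidableEq A₂]
    (R : A₁ × A₂ → ℝ) (p : A₁ → ℝ) (b : A₂) :
    expR R p (pmass b) = ∑ a, p a * R (a, b) := by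
  unfold expR pmass
  refine Finset.sum_congr rfl fun a _ => ?_
  simp [ite_mul, mul_ite]

lemma expR_pm_left {A₁ A₂ : Type*} [Fintype A₁] [Fintype A₂] [DecidableEq A₁]
    (R : A₁ × A₂ → ℝ) (a : A₁) (q : A₂ → ℝ) :
    expR R (pmass a) q = ∑ b, q b * R (a, b) := by
  unfold expR pmass
  rw [Finset.sum_eq_single a]
  · simp
  · intro a' _ h; simp [h]
  · simp

lemma isMixed_pmass {α : Type*} [Fintype α] [DecidableEq α] (a : α) :
    IsMixed (pmass a) := by
  constructor
  · intro x; unfold pmass; positivity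
  · simp [pmass]

/-- If `R` lies in the `ι`-strict unique Nash set of the pure strategy profile `π`
(all Nash inequalities hold with gap at least `ι > 0`), then `π` is the unique
mixed Nash equilibrium of `(A, R)`:  `U̲(π; ι) ⊆ U(π)`. -/
theorem iota_strict_subset_uniqueNash {A₁ A₂ : Type*} [Fintype A₁] [Fintype A₂]
    [DecidableEq A₁] [DecidableEq A₂] [Nonempty A₁] [Nonempty A₂]
    (π : A₁ × A₂) (ι : ℝ) (hι : 0 < ι) (R : A₁ × A₂ → ℝ)
    (hgap₂ : ∀ a₂, a₂ ≠ π.2 → R (π.1, a₂) + ι ≤ R π)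
    (hgap₁ : ∀ a₁, a₁ ≠ π.1 → R π ≤ R (a₁, π.2) - ι) :
    NESet R = {(pmass π.1, pmass π.2)} :=  by
  have h2 : ∀ b, R (π.1, b) ≤ R π := by
    intro b
    by_cases hb : b = π.2
    · subst hb; simp
    · linarith [hgap₂ b hb]
  have h1 : ∀ a, R π ≤ R (a, π.2) := by
    intro a
    by_cases ha : a = π.1
    · subst ha; simp
    · linarith [hgap₁ a ha]
  ext ⟨p, q⟩
  simp only [NESet, Set.mem_setOf_eq, Set.mem_singleton_iff, Prod.mk.injEq]
  constructor
  · rintro ⟨hp, hq, hmax, hmin⟩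
    have hπ1q : expR R (pmass π.1) q ≤ R π := by
      rw [expR_pm_left]
      calc ∑ b, q b * R (π.1, b) ≤ ∑ b, q b * R π :=
            Finset.sum_le_sum fun b _ =>
              mul_le_mul_of_nonneg_left (h2 b) (hq.1 b)
        _ = R π := by rw [← Finset.sum_mul, hq.2, one_mul]
    have hpπ2 : R π ≤ expR R p (pmass π.2) := by
      rw [expR_pm_right]
      calc R π = ∑ a, p a * R π := by rw [← Finset.sum_mul, hp.2, one_mul]
        _ ≤ ∑ a, p a * R (a, π.2) :=
            Finset.sum_le_sum fun a _ =>
              mul_le_mul_of_nonneg_left (h1 a) (hp.1 a)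
    have hv : expR R p q = R π :=
      le_antisymm ((hmin π.1).trans hπ1q) (hpπ2.trans (hmax π.2))
    -- q is pure
    have hq0 : ∀ b, b ≠ π.2 → q b = 0 := by
      intro b hb
      have heq : expR R (pmass π.1) q = R π :=
        le_antisymm hπ1q (hv ▸ hmin π.1)
      rw [expR_pm_left] at heq
      have hsum0 : ∑ c, q c * (R π - R (π.1, c)) = 0 := by
        have : ∑ c, q c * (R π - R (π.1, c))
            = (∑ c, q c * R π) - ∑ c, q c * R (π.1, c) := by
          rw [← Finset.sum_sub_distrib]; exact Finset.sum_congr rfl fun c _ => by ring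
        rw [this, ← Finset.sum_mul, hq.2, one_mul, heq, sub_self]
      have hterm : q b * (R π - R (π.1, b)) = 0 := by
        have := (Finset.sum_eq_zero_iff_of_nonneg
          (fun c _ => mul_nonneg (hq.1 c) (by linarith [h2 c]))).mp hsum0
        exact this b (Finset.mem_univ b)
      have hpos : 0 < R π - R (π.1, b) := by linarith [hgap₂ b hb]
      rcases mul_eq_zero.mp hterm with h | h
      · exact h
      · linarith
    have hqeq : q = pmass π.2 := by
      funext b
      by_cases hb : b = π.2
      · subst hb
        have : ∑ c, q c = q π.2 :=
          Finset.sum_eq_single_of_mem π.2 (Finset.mem_univ _)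
            fun c _ hc => hq0 c hc
        rw [hq.2] at this
        simp [pmass, ← this]
      · simp [pmass, hb, hq0 b hb]
    -- p is pure
    have hp0 : ∀ a, a ≠ π.1 → p a = 0 := by
      intro a ha
      have heq : expR R p (pmass π.2) = R π :=
        le_antisymm (hv ▸ hmax π.2) hpπ2
      rw [expR_pm_right] at heq
      have hsum0 : ∑ c, p c * (R (c, π.2) - R π) = 0 := by
        have : ∑ c, p c * (R (c, π.2) - R π)
            = (∑ c, p c * R (c, π.2)) - ∑ c, p c * R π := by
          rw [← Finset.sum_sub_distrib]; exact Finset.sum_congr rfl fun c _ => by ring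
        rw [this, ← Finset.sum_mul, hp.2, one_mul, heq, sub_self]
      have hterm : p a * (R (a, π.2) - R π) = 0 := by
        have := (Finset.sum_eq_zero_iff_of_nonneg
          (fun c _ => mul_nonneg (hp.1 c) (by linarith [h1 c]))).mp hsum0
        exact this a (Finset.mem_univ a)
      have hpos : 0 < R (a, π.2) - R π := by linarith [hgap₁ a ha]
      rcases mul_eq_zero.mp hterm with h | h
      · exact h
      · linarith
    have hpeq : p = pmass π.1 := by
      funext a
      by_cases ha : a = π.1
      · subst ha
        have : ∑ c, p c = p π.1 :=
          Finset.sum_eq_single_of_mem π.1 (Finset.mem_univ _)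
            fun c _ hc => hp0 c hc
        rw [hp.2] at this
        simp [pmass, ← this]
      · simp [pmass, ha, hp0 a ha]
    exact ⟨hpeq, hqeq⟩
  · rintro ⟨rfl, rfl⟩
    refine ⟨isMixed_pmass _, isMixed_pmass _, ?_, ?_⟩
    · intro b
      rw [expR_pm_right, expR_pm_left]
      have : ∑ a, pmass π.1 a * R (a, b) = R (π.1, b) := by
        rw [Finset.sum_eq_single π.1] <;> simp [pmass]
        intro a' h; simp [pmass, h]
      rw [this]
      calc R (π.1, b) ≤ R π := h2 b
        _ = ∑ c, pmass π.2 c * R (π.1, c) := by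
            rw [Finset.sum_eq_single π.2] <;> simp [pmass]
            intro c h; simp [pmass, h]
    · intro a
      rw [expR_pm_left, expR_pm_left]
      calc ∑ c, pmass π.2 c * R (π.1, c) = R π := by
            rw [Finset.sum_eq_single π.2] <;> simp [pmass]
            intro c h; simp [pmass, h]
        _ ≤ R (a, π.2) := h1 a
        _ = ∑ c, pmass π.2 c * R (a, c) := by
            rw [Finset.sum_eq_single π.2] <;> simp [pmass]
            intro c h; simp [pmass, h]
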